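/- arXiv:2405.17917 — 3 statements merged into one kernel-verified Lean document; each statement's English description precedes it below -/
import Mathlib

section
/- For natural numbers N, K with 1 ≤ K ≤ N, the infimum of the number of tests over all designs feasible for (N, K) equals the infimum of the number of tests over all designs feasible for (N, K) that are in systematic form; that is, T(N, K) = min{|𝒯| : 𝒯 is feasible for (N, K) and in systematic form}. -/
/-- The outcome of a cascaded test `t` (a list of items) on a defective set `S`:
the first element of `t` belonging to `S`, or `none` if there is none. -/
def outcome {N : ℕ} (t : List (Fin N)) (S : Finset (Fin N)) : Option (Fin N) :=
  (t.filter (fun x => x ∈ S)).head?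

/-- A testing design `𝒯` (an indexed family of tests) is feasible for `(N, K)` if the
map sending each `S ⊆ Fin N` with `|S| ≤ K` to its vector of test outcomes is injective
on `{S | |S| ≤ K}`. -/
def Feasible (N K : ℕ) {T : ℕ} (𝒯 : Fin T → List (Fin N)) : Prop :=
  Set.InjOn (fun (S : Finset (Fin N)) => fun i : Fin T => outcome (𝒯 i) S)
    {S : Finset (Fin N) | S.card ≤ K}

/-- `TNK N K`: the minimum number of tests over all duplicate-free testing designs
feasible for `(N, K)`. -/
noncomputable def TNK (N K : ℕ) : ℕ :=
  sInf {T : ℕ | ∃ 𝒯 : Fin T → List (Fin N), (∀ i, (𝒯 i).Nodup) ∧ Feasible N K 𝒯}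

/-- `fT 𝒯 S v`: the number of tests in the design `𝒯` whose outcome on `S` is `some v`. -/
def fT {N T : ℕ} (𝒯 : Fin T → List (Fin N)) (S : Finset (Fin N)) (v : Fin N) : ℕ :=
  (Finset.univ.filter (fun i : Fin T => outcome (𝒯 i) S = some v)).card

/-- A design is in systematic form if every test is nonempty and the first element of
each test does not occur in any other test. -/
def Systematic {N T : ℕ} (𝒯 : Fin T → List (Fin N)) : Prop :=
  ∀ i : Fin T, 𝒯 i ≠ [] ∧ ∀ u : Fin N, (𝒯 i).head? = some u → ∀ j : Fin T, j ≠ i → u ∉ 𝒯 j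

lemma mem_of_outcome_eq_some {N : ℕ} {t : List (Fin N)} {S : Finset (Fin N)} {u : Fin N}
    (h : outcome t S = some u) : u ∈ S := by
  unfold outcome at h
  have hu : u ∈ t.filter (fun x => x ∈ S) := List.mem_of_mem_head? (by rw [h]; rfl)
  simpa using (List.mem_filter.1 hu).2

lemma outcome_cons_self {N : ℕ} {u : Fin N} {r : List (Fin N)} {S : Finset (Fin N)}
    (h : u ∈ S) : outcome (u :: r) S = some u := by
  unfold outcome
  simp [List.filter_cons, h]

lemma outcome_singleton {N : ℕ} (v : Fin N) (S : Finset (Fin N)) :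
    outcome [v] S = if v ∈ S then some v else none := by
  unfold outcome
  by_cases h : v ∈ S <;> simp [h]

lemma aux1 {N : ℕ} (u : Fin N) (p q : Fin N → Bool) (hpu : p u = true) (hqu : q u = true) :
    ∀ t : List (Fin N),
      (t.filter (fun x => p x && !(x == u))).head? = (t.filter (fun x => q x && !(x == u))).head? →
      (t.filter p).head? = (t.filter q).head?
  | [] => fun _ => rfl
  | a :: t => by
    intro h
    by_cases hau : a = u
    · subst hau
      simp [List.filter_cons, hpu, hqu]
    · have hne : (a == u) = false := by simp [hau]
      cases hpa : p a <;> cases hqa : q a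
      · simp only [List.filter_cons, hpa, hne, hqa, Bool.false_and, Bool.false_eq_true,
          if_false] at h ⊢
        exact aux1 u p q hpu hqu t h
      · exfalso
        simp only [List.filter_cons, hpa, hqa, hne, Bool.false_and, Bool.not_false,
          Bool.and_true, Bool.false_eq_true, if_false, if_true, List.head?_cons] at h
        have : a ∈ t.filter (fun x => p x && !(x == u)) :=
          List.mem_of_mem_head? (by rw [h]; rfl)
        have := (List.mem_filter.1 this).2
        simp [hpa] at this
      · exfalso
        simp only [List.filter_cons, hpa, hqa, hne, Bool.false_and, Bool.not_false,
          Bool.and_true, Bool.false_eq_true, if_false, if_true, List.head?_cons] at h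
        have : a ∈ t.filter (fun x => q x && !(x == u)) :=
          List.mem_of_mem_head? (by rw [← h]; rfl)
        have := (List.mem_filter.1 this).2
        simp [hqa] at this
      · simp [List.filter_cons, hpa, hqa]

lemma outcome_filter_ne {N : ℕ} (t : List (Fin N)) (u : Fin N) (S : Finset (Fin N)) :
    outcome (t.filter (fun x => !(x == u))) S
      = (t.filter (fun x => decide (x ∈ S) && !(x == u))).head? := by
  unfold outcome
  rw [List.filter_filter]

lemma aux2 {N : ℕ} {t : List (Fin N)} {u : Fin N} {S₁ S₂ : Finset (Fin N)}
    (hiff : u ∈ S₁ ↔ u ∈ S₂)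
    (h : outcome (t.filter (fun x => !(x == u))) S₁
        = outcome (t.filter (fun x => !(x == u))) S₂) :
    outcome t S₁ = outcome t S₂ := by
  rw [outcome_filter_ne, outcome_filter_ne] at h
  by_cases hu : u ∈ S₁
  · have hu2 := hiff.1 hu
    unfold outcome
    exact aux1 u _ _ (by simp [hu]) (by simp [hu2]) t h
  · have hu2 : u ∉ S₂ := fun h' => hu (hiff.2 h')
    have e1 : t.filter (fun x => decide (x ∈ S₁)) =
        t.filter (fun x => decide (x ∈ S₁) && !(x == u)) := by
      apply List.filter_congr
      intro x _
      by_cases hxu : x = u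
      · subst hxu; simp [hu]
      · simp [hxu]
    have e2 : t.filter (fun x => decide (x ∈ S₂)) =
        t.filter (fun x => decide (x ∈ S₂) && !(x == u)) := by
      apply List.filter_congr
      intro x _
      by_cases hxu : x = u
      · subst hxu; simp [hu2]
      · simp [hxu]
    unfold outcome
    rw [e1, e2]
    exact h

lemma step_feasible {N K T : ℕ} {𝒯 : Fin T → List (Fin N)} (hF : Feasible N K 𝒯)
    (i : Fin T) (u : Fin N) (hu : (𝒯 i).head? = some u) :
    Feasible N K (fun j => if j = i then 𝒯 j else (𝒯 j).filter (fun x => !(x == u))) := by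
  intro S₁ h1 S₂ h2 heq
  simp only at heq
  have hi := congrFun heq i
  simp only [eq_self_iff_true, if_true] at hi
  obtain ⟨r, hr⟩ : ∃ r, 𝒯 i = u :: r := by
    cases hc : 𝒯 i with
    | nil => rw [hc] at hu; simp at hu
    | cons a r =>
      rw [hc] at hu; simp only [List.head?_cons, Option.some.injEq] at hu
      exact ⟨r, by rw [hu]⟩
  have hiff : u ∈ S₁ ↔ u ∈ S₂ := by
    constructor
    · intro hmem
      have h1' : outcome (𝒯 i) S₁ = some u := by rw [hr]; exact outcome_cons_self hmem
      rw [h1'] at hi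
      exact mem_of_outcome_eq_some hi.symm
    · intro hmem
      have h2' : outcome (𝒯 i) S₂ = some u := by rw [hr]; exact outcome_cons_self hmem
      rw [h2'] at hi
      exact mem_of_outcome_eq_some hi
  refine hF h1 h2 ?_
  funext j
  by_cases hj : j = i
  · subst hj; exact hi
  · have hj' := congrFun heq j
    simp only [if_neg hj] at hj'
    exact aux2 hiff hj'

lemma drop_feasible {N K m : ℕ} {𝒯 : Fin (m+1) → List (Fin N)} (hF : Feasible N K 𝒯)
    (i : Fin (m+1)) (hi : 𝒯 i = []) :
    Feasible N K (fun k : Fin m => 𝒯 (i.succAbove k)) := by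
  intro S₁ h1 S₂ h2 heq
  refine hF h1 h2 ?_
  funext j
  by_cases hj : j = i
  · subst hj
    show outcome (𝒯 j) S₁ = outcome (𝒯 j) S₂
    rw [hi]; rfl
  · obtain ⟨k, hk⟩ := Fin.exists_succAbove_eq hj
    have := congrFun heq k
    simpa [hk] using this

lemma exists_systematic {N K : ℕ} :
    ∀ n : ℕ, ∀ T : ℕ, ∀ 𝒯 : Fin T → List (Fin N),
      T + ∑ i, (𝒯 i).length ≤ n →
      (∀ i, (𝒯 i).Nodup) → Feasible N K 𝒯 →
      ∃ T' ≤ T, ∃ 𝒯' : Fin T' → List (Fin N),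
        (∀ i, (𝒯' i).Nodup) ∧ Feasible N K 𝒯' ∧ Systematic 𝒯' := by
  intro n
  induction n with
  | zero =>
    intro T 𝒯 hmu hnd hF
    have hT : T = 0 := by omega
    subst hT
    exact ⟨0, le_refl 0, 𝒯, hnd, hF, fun i => i.elim0⟩
  | succ n ih =>
    intro T 𝒯 hmu hnd hF
    by_cases hsys : Systematic 𝒯
    · exact ⟨T, le_refl T, 𝒯, hnd, hF, hsys⟩
    by_cases hemp : ∃ i, 𝒯 i = []
    · obtain ⟨i, hi⟩ := hemp
      cases T with
      | zero => exact i.elim0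
      | succ m =>
        have hF' := drop_feasible hF i hi
        have hs : ∑ j : Fin (m+1), (𝒯 j).length
            = (𝒯 i).length + ∑ k : Fin m, (𝒯 (i.succAbove k)).length :=
          Fin.sum_univ_succAbove _ i
        rw [hi] at hs
        simp only [List.length_nil, zero_add] at hs
        have hmu' : m + ∑ k : Fin m, (𝒯 (i.succAbove k)).length ≤ n := by omega
        obtain ⟨T', hT', rest⟩ := ih m _ hmu' (fun k => hnd _) hF'
        exact ⟨T', le_trans hT' (Nat.le_succ m), rest⟩
    · push_neg at hemp
      rw [Systematic] at hsys
      push_neg at hsys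
      obtain ⟨i, hviol⟩ := hsys
      obtain ⟨u, hu, j, hji, huj⟩ := hviol (hemp i)
      set 𝒯' : Fin T → List (Fin N) :=
        fun k => if k = i then 𝒯 k else (𝒯 k).filter (fun x => !(x == u)) with h𝒯'
      have hF' : Feasible N K 𝒯' := step_feasible hF i u hu
      have hnd' : ∀ k, (𝒯' k).Nodup := by
        intro k
        by_cases hk : k = i
        · simp [h𝒯', hk]; exact hnd i
        · simp only [h𝒯', if_neg hk]
          exact (hnd k).filter _
      have hsum : ∑ k, (𝒯' k).length < ∑ k, (𝒯 k).length := by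
        apply Finset.sum_lt_sum
        · intro k _
          by_cases hk : k = i
          · simp [h𝒯', hk]
          · simp only [h𝒯', if_neg hk]
            exact List.length_filter_le _ _
        · refine ⟨j, Finset.mem_univ j, ?_⟩
          simp only [h𝒯', if_neg hji]
          rw [List.length_filter_lt_length_iff_exists]
          exact ⟨u, huj, by simp⟩
      have hmu' : T + ∑ k, (𝒯' k).length ≤ n := by omega
      obtain ⟨T', hT', rest⟩ := ih T 𝒯' hmu' hnd' hF'
      exact ⟨T', hT', rest⟩

lemma singleton_design {N K : ℕ} :
    (∀ i : Fin N, ([i] : List (Fin N)).Nodup) ∧ Feasible N K (fun i : Fin N => [i])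
      ∧ Systematic (fun i : Fin N => [i]) := by
  refine ⟨fun i => List.nodup_singleton i, ?_, ?_⟩
  · intro S₁ _ S₂ _ heq
    ext x
    have hx := congrFun heq x
    simp only [outcome_singleton] at hx
    by_cases hx1 : x ∈ S₁ <;> by_cases hx2 : x ∈ S₂ <;> simp [hx1, hx2] at hx ⊢
  · intro i
    refine ⟨by simp, ?_⟩
    intro u hu j hj
    simp only [List.head?_cons, Option.some.injEq] at hu
    subst hu
    intro hm
    rw [List.mem_singleton] at hm
    exact hj hm.symm

theorem stmt5 (N K : ℕ) (hK : 1 ≤ K) (hKN : K ≤ N) :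
    TNK N K = sInf {T : ℕ | ∃ 𝒯 : Fin T → List (Fin N),
      (∀ i, (𝒯 i).Nodup) ∧ Feasible N K 𝒯 ∧ Systematic 𝒯} := by
  obtain ⟨hnd₀, hF₀, hs₀⟩ := singleton_design (N := N) (K := K)
  have hBne : ∃ T, T ∈ {T : ℕ | ∃ 𝒯 : Fin T → List (Fin N),
      (∀ i, (𝒯 i).Nodup) ∧ Feasible N K 𝒯 ∧ Systematic 𝒯} :=
    ⟨N, ⟨_, hnd₀, hF₀, hs₀⟩⟩
  have hAne : ∃ T, T ∈ {T : ℕ | ∃ 𝒯 : Fin T → List (Fin N),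
      (∀ i, (𝒯 i).Nodup) ∧ Feasible N K 𝒯} :=
    ⟨N, ⟨_, hnd₀, hF₀⟩⟩
  apply le_antisymm
  · obtain ⟨𝒯, hnd, hF, _⟩ := Nat.sInf_mem hBne
    exact Nat.sInf_le ⟨𝒯, hnd, hF⟩
  · obtain ⟨𝒯, hnd, hF⟩ := Nat.sInf_mem hAne
    obtain ⟨T', hT', 𝒯', hnd', hF', hs'⟩ :=
      exists_systematic (TNK N K + ∑ i, (𝒯 i).length) (TNK N K) 𝒯 (le_refl _) hnd hF
    exact le_trans (Nat.sInf_le ⟨𝒯', hnd', hF', hs'⟩) hT'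
end

section
/- Let N, K be natural numbers with 1 ≤ K ≤ N, let 𝒯 = (t_1, …, t_T) be a testing design in systematic form on Fin N, and let L = {first element of t_i : i ∈ {1,…,T}}. Then 𝒯 is feasible for (N, K) if and only if for every subset S ⊆ (Fin N) \ L with 1 ≤ |S| ≤ K and every v ∈ S, one has f_𝒯(S, v) ≥ K + 1 − |S|. -/
lemma outcome_mem {N : ℕ} {t : List (Fin N)} {S : Finset (Fin N)} {v : Fin N}
    (h : outcome t S = some v) : v ∈ S ∧ v ∈ t := by
  unfold outcome at h
  have hv : v ∈ t.filter (fun x => x ∈ S) := List.mem_of_mem_head? (by rw [h]; rfl)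
  rw [List.mem_filter] at hv
  exact ⟨by simpa using hv.2, hv.1⟩

lemma outcome_of_head {N : ℕ} {t : List (Fin N)} {S : Finset (Fin N)} {u : Fin N}
    (hu : u ∈ S) (h : t.head? = some u) : outcome t S = some u := by
  cases t with
  | nil => simp at h
  | cons a l =>
    simp only [List.head?_cons, Option.some.injEq] at h
    subst h
    unfold outcome
    simp [List.filter_cons, hu]

lemma outcome_congr {N : ℕ} {t : List (Fin N)} {S S' : Finset (Fin N)}
    (h : ∀ x ∈ t, x ∈ S ↔ x ∈ S') : outcome t S = outcome t S' := by
  unfold outcome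
  congr 1
  apply List.filter_congr
  intro x hx
  simpa using h x hx

lemma outcome_erase {N : ℕ} {t : List (Fin N)} {S : Finset (Fin N)} {v : Fin N}
    (h : outcome t S ≠ some v) : outcome t (S.erase v) = outcome t S := by
  unfold outcome at *
  have key : t.filter (fun x => x ∈ S.erase v)
      = (t.filter (fun x => x ∈ S)).filter (fun x => x ≠ v) := by
    rw [List.filter_filter]
    apply List.filter_congr
    intro x hx
    simp [Finset.mem_erase, and_comm]
  rw [key]
  cases hl : t.filter (fun x => (x ∈ S : Prop)) with
  | nil => simp
  | cons a tl =>
    rw [hl] at h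
    simp only [List.head?_cons] at h ⊢
    have ha : a ≠ v := fun hh => h (by rw [hh])
    simp [List.filter_cons, ha]

lemma head_exists {N T : ℕ} {𝒯 : Fin T → List (Fin N)} (hsys : Systematic 𝒯) (i : Fin T) :
    ∃ u, (𝒯 i).head? = some u := by
  cases h : (𝒯 i).head? with
  | none => exact absurd (List.head?_eq_none_iff.mp h) (hsys i).1
  | some u => exact ⟨u, rfl⟩

lemma necessity {N K T : ℕ} {𝒯 : Fin T → List (Fin N)}
    (hsys : Systematic 𝒯) (hfeas : Feasible N K 𝒯)
    (S : Finset (Fin N)) (hL : ∀ v ∈ S, ∀ i, (𝒯 i).head? ≠ some v)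
    (h1 : 1 ≤ S.card) (h2 : S.card ≤ K) (v : Fin N) (hv : v ∈ S) :
    K + 1 - S.card ≤ fT 𝒯 S v := by
  classical
  by_contra hcon
  push_neg at hcon
  have hcon' : fT 𝒯 S v + S.card ≤ K := by omega
  set I : Finset (Fin T) := Finset.univ.filter (fun i => outcome (𝒯 i) S = some v) with hI
  have hIcard : I.card = fT 𝒯 S v := rfl
  set E : Finset (Fin N) := I.image (fun i => ((𝒯 i).head?).getD v) with hEdef
  have hEcard : E.card ≤ fT 𝒯 S v := le_trans Finset.card_image_le (le_of_eq hIcard)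
  have hEmem : ∀ x ∈ E, ∃ i ∈ I, (𝒯 i).head? = some x := by
    intro x hx
    rw [hEdef, Finset.mem_image] at hx
    obtain ⟨i, hiI, hix⟩ := hx
    obtain ⟨u, hu⟩ := head_exists hsys i
    rw [hu] at hix
    simp at hix
    exact ⟨i, hiI, by rw [hu, hix]⟩
  have hES : ∀ x ∈ E, x ∉ S := by
    intro x hx hxS
    obtain ⟨i, _, hix⟩ := hEmem x hx
    exact hL x hxS i hix
  have hvE : v ∉ E := fun h => hES v h hv
  set S₁ : Finset (Fin N) := S ∪ E with hS₁def
  set S₂ : Finset (Fin N) := S.erase v ∪ E with hS₂def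
  have hc1 : S₁.card ≤ K :=
    le_trans (Finset.card_union_le _ _) (by omega)
  have hc2 : S₂.card ≤ K := by
    refine le_trans (Finset.card_union_le _ _) ?_
    have := Finset.card_erase_of_mem hv
    omega
  have hne : S₁ ≠ S₂ := by
    intro h
    have hv1 : v ∈ S₁ := Finset.mem_union_left _ hv
    rw [h, hS₂def, Finset.mem_union] at hv1
    rcases hv1 with h' | h'
    · exact (Finset.mem_erase.mp h').1 rfl
    · exact hvE h'
  have hout : ∀ j, outcome (𝒯 j) S₁ = outcome (𝒯 j) S₂ := by
    intro j
    by_cases hj : outcome (𝒯 j) S = some v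
    · obtain ⟨u, hu⟩ := head_exists hsys j
      have hjI : j ∈ I := by rw [hI]; simp [hj]
      have huE : u ∈ E := by
        rw [hEdef, Finset.mem_image]
        exact ⟨j, hjI, by rw [hu]; rfl⟩
      rw [outcome_of_head (Finset.mem_union_right _ huE : u ∈ S₁) hu,
        outcome_of_head (Finset.mem_union_right _ huE : u ∈ S₂) hu]
    · have hjI : j ∉ I := by rw [hI]; simp [hj]
      have hEj : ∀ x ∈ E, x ∉ 𝒯 j := by
        intro x hx
        obtain ⟨i, hiI, hix⟩ := hEmem x hx
        have hij : j ≠ i := fun h => hjI (h ▸ hiI)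
        exact (hsys i).2 x hix j hij
      have e1 : outcome (𝒯 j) S₁ = outcome (𝒯 j) S := by
        apply outcome_congr
        intro x hx
        rw [hS₁def, Finset.mem_union]
        exact ⟨fun h => h.resolve_right (fun h' => hEj x h' hx), Or.inl⟩
      have e2 : outcome (𝒯 j) S₂ = outcome (𝒯 j) (S.erase v) := by
        apply outcome_congr
        intro x hx
        rw [hS₂def, Finset.mem_union]
        exact ⟨fun h => h.resolve_right (fun h' => hEj x h' hx), Or.inl⟩
      rw [e1, e2, outcome_erase hj]
  exact hne (hfeas hc1 hc2 (funext hout))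

lemma sufficiency_key {N K T : ℕ} {𝒯 : Fin T → List (Fin N)} (hsys : Systematic 𝒯)
    (hcond : ∀ S : Finset (Fin N),
        (∀ v ∈ S, ∀ i : Fin T, (𝒯 i).head? ≠ some v) →
        1 ≤ S.card → S.card ≤ K →
        ∀ v ∈ S, K + 1 - S.card ≤ fT 𝒯 S v)
    {S₁ S₂ : Finset (Fin N)} (h₁ : S₁.card ≤ K)
    (heq : ∀ i, outcome (𝒯 i) S₁ = outcome (𝒯 i) S₂)
    {v : Fin N} (hv : v ∈ S₁) (hv2 : v ∉ S₂) : False := by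
  classical
  set Sf : Finset (Fin N) := S₁.filter (fun w => ∀ i, (𝒯 i).head? ≠ some w) with hSfdef
  have hvSf : v ∈ Sf := by
    rw [hSfdef, Finset.mem_filter]
    refine ⟨hv, fun i hi => ?_⟩
    have h1 := outcome_of_head hv hi
    rw [heq i] at h1
    exact hv2 (outcome_mem h1).1
  have hSfsub : Sf ⊆ S₁ := Finset.filter_subset _ _
  have hSfL : ∀ w ∈ Sf, ∀ i, (𝒯 i).head? ≠ some w := by
    intro w hw
    exact (Finset.mem_filter.mp hw).2
  have hf := hcond Sf hSfL (Finset.card_pos.mpr ⟨v, hvSf⟩)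
    (le_trans (Finset.card_le_card hSfsub) h₁) v hvSf
  set B : Finset (Fin N) := S₁ \ Sf with hBdef
  have hBcard : B.card = S₁.card - Sf.card := Finset.card_sdiff_of_subset hSfsub
  have hcards : Sf.card ≤ S₁.card := Finset.card_le_card hSfsub
  have hfB : B.card + 1 ≤ fT 𝒯 Sf v := by
    have h1 : 1 ≤ Sf.card := Finset.card_pos.mpr ⟨v, hvSf⟩
    omega
  set J : Finset (Fin T) := Finset.univ.filter (fun i => outcome (𝒯 i) Sf = some v) with hJdef
  have hJcard : J.card = fT 𝒯 Sf v := rfl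
  set g : Fin T → Fin N := fun i => ((𝒯 i).head?).getD v with hgdef
  have hghead : ∀ i, (𝒯 i).head? = some (g i) := by
    intro i
    obtain ⟨u, hu⟩ := head_exists hsys i
    simp [hgdef, hu]
  -- there is a test in J whose head is not in B
  have hex : ∃ i ∈ J, g i ∉ B := by
    by_contra hall
    push_neg at hall
    have hinj : Set.InjOn g ↑J := by
      intro i _ j _ hij
      by_contra hne
      have h1 := (hsys i).2 (g i) (hghead i) j (Ne.symm hne)
      have h2 : g j ∈ 𝒯 j := List.mem_of_mem_head? (by rw [hghead j]; rfl)
      rw [hij] at h1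
      exact h1 h2
    have := Finset.card_le_card_of_injOn g hall hinj
    omega
  obtain ⟨i, hiJ, hiB⟩ := hex
  have hiout : outcome (𝒯 i) Sf = some v := (Finset.mem_filter.mp hiJ).2
  have hcong : outcome (𝒯 i) S₁ = outcome (𝒯 i) Sf := by
    apply outcome_congr
    intro x hx
    constructor
    · intro hxS₁
      rw [hSfdef, Finset.mem_filter]
      refine ⟨hxS₁, fun j hj => ?_⟩
      by_cases hji : j = i
      · subst hji
        apply hiB
        rw [hBdef, Finset.mem_sdiff]
        have hxg : g j = x := by
          have := hghead j; rw [hj] at this; simpa using this.symm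
        rw [hxg]
        exact ⟨hxS₁, fun hxSf => (Finset.mem_filter.mp hxSf).2 j hj⟩
      · exact (hsys j).2 x hj i (fun h => hji h.symm) hx
    · exact fun h => hSfsub h
  have hS1v : outcome (𝒯 i) S₁ = some v := hcong.trans hiout
  have hS2v : outcome (𝒯 i) S₂ = some v := (heq i).symm.trans hS1v
  exact hv2 (outcome_mem hS2v).1

theorem stmt6 (N K T : ℕ) (hK : 1 ≤ K) (hKN : K ≤ N)
    (𝒯 : Fin T → List (Fin N)) (hnd : ∀ i, (𝒯 i).Nodup) (hsys : Systematic 𝒯) :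
    Feasible N K 𝒯 ↔
      ∀ S : Finset (Fin N),
        (∀ v ∈ S, ∀ i : Fin T, (𝒯 i).head? ≠ some v) →
        1 ≤ S.card → S.card ≤ K →
        ∀ v ∈ S, K + 1 - S.card ≤ fT 𝒯 S v := by
  constructor
  · intro hfeas S hLS h1 h2 v hv
    exact necessity hsys hfeas S hLS h1 h2 v hv
  · intro hcond S₁ hS₁ S₂ hS₂ heq
    by_contra hne
    have heq' : ∀ i, outcome (𝒯 i) S₁ = outcome (𝒯 i) S₂ := fun i => congrFun heq i
    by_cases h12 : S₁ ⊆ S₂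
    · obtain ⟨v, hv, hv2⟩ := Finset.not_subset.mp
        (fun h21 => hne (Finset.Subset.antisymm h12 h21))
      exact sufficiency_key hsys hcond hS₂ (fun i => (heq' i).symm) hv hv2
    · obtain ⟨v, hv, hv2⟩ := Finset.not_subset.mp h12
      exact sufficiency_key hsys hcond hS₁ heq' hv hv2
end

section
/- Let α, β, K, N be natural numbers with α ≥ 1, β ≥ 1 and α + β = K + 1. If N ≥ α(β + 1) − 1, then every testing design feasible for (N, K) has at least αβ tests; that is, T(N, K) ≥ αβ. -/
/-!
Suppose a design `𝒯` has `T < αβ` tests. At most `T` items are first elements of tests,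
so at least `α` items are not; let `X` be a set of `α` of them. By pigeonhole some `x ∈ X`
is the outcome on `X` of fewer than `β` tests. Add to `X` the first elements of those tests to get
`S` with `|S| ≤ α + β - 1 = K`. No test has outcome `x` on `S`: a test seeing `x` first within
`S` would also see it first within `X`, but then its own first element, which lies in `S` and
differs from `x`, comes earlier. Hence `S` and `S \ {x}` have the same outcomes.
-/

open Finset

variable {N T : ℕ}

theorem outcome_cons_of_mem {a : Fin N} {S : Finset (Fin N)} (l : List (Fin N)) (ha : a ∈ S) :
    outcome (a :: l) S = some a := by
  simp [outcome, ha]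

theorem outcome_erase_of_ne {t : List (Fin N)} {S : Finset (Fin N)} {x : Fin N}
    (h : outcome t S ≠ some x) : outcome t (S.erase x) = outcome t S := by
  induction t with
  | nil => rfl
  | cons a t ih =>
    by_cases ha : a ∈ S
    · have hax : a ≠ x := by rintro rfl; exact h (outcome_cons_of_mem t ha)
      rw [outcome_cons_of_mem t ha, outcome_cons_of_mem t (mem_erase.2 ⟨hax, ha⟩)]
    · have ha' : a ∉ S.erase x := fun h' => ha (mem_of_mem_erase h')
      simp only [outcome, List.filter_cons, ha, ha', decide_false] at h ⊢
      exact ih h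

theorem outcome_eq_of_subset {t : List (Fin N)} {X S : Finset (Fin N)} {v : Fin N}
    (hXS : X ⊆ S) (hv : v ∈ X) (h : outcome t S = some v) : outcome t X = some v := by
  induction t with
  | nil => simp [outcome] at h
  | cons a t ih =>
    by_cases ha : a ∈ S
    · rw [outcome_cons_of_mem t ha, Option.some_inj] at h
      subst h
      exact outcome_cons_of_mem t hv
    · have ha' : a ∉ X := fun h' => ha (hXS h')
      simp only [outcome, List.filter_cons, ha, ha', decide_false] at h ⊢
      exact ih h

def heads (𝒯 : Fin T → List (Fin N)) (R : Finset (Fin T)) : Finset (Fin N) :=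
  R.biUnion fun i => (𝒯 i).head?.toFinset

theorem card_heads_le (𝒯 : Fin T → List (Fin N)) (R : Finset (Fin T)) :
    #(heads 𝒯 R) ≤ #R := by
  simpa [heads] using card_biUnion_le_card_mul R (fun i => (𝒯 i).head?.toFinset) 1
    fun i _ => by cases (𝒯 i).head? <;> simp

theorem mem_heads {𝒯 : Fin T → List (Fin N)} {R : Finset (Fin T)} {i : Fin T}
    {a : Fin N} {l : List (Fin N)} (hi : i ∈ R) (h : 𝒯 i = a :: l) : a ∈ heads 𝒯 R :=
  mem_biUnion.2 ⟨i, hi, by simp [h]⟩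

theorem outcome_union_heads_ne (𝒯 : Fin T → List (Fin N)) {X : Finset (Fin N)} {x : Fin N}
    (hx : x ∈ X) (hxh : x ∉ heads 𝒯 univ) (i : Fin T) :
    outcome (𝒯 i) (X ∪ heads 𝒯 {j | outcome (𝒯 j) X = some x}) ≠ some x := by
  intro h
  have hiX : outcome (𝒯 i) X = some x := outcome_eq_of_subset subset_union_left hx h
  obtain ⟨a, l, hi⟩ : ∃ a l, 𝒯 i = a :: l := by
    cases hc : 𝒯 i with
    | nil => simp [hc, outcome] at hiX
    | cons a l => exact ⟨a, l, rfl⟩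
  have haS : a ∈ X ∪ heads 𝒯 {j | outcome (𝒯 j) X = some x} :=
    mem_union_right _ (mem_heads (by simpa using hiX) hi)
  rw [hi, outcome_cons_of_mem l haS, Option.some_inj] at h
  exact hxh (mem_heads (mem_univ i) (h ▸ hi))

theorem not_feasible_of_card_add_card_fiber_le {K : ℕ} (𝒯 : Fin T → List (Fin N))
    {X : Finset (Fin N)} {x : Fin N} (hx : x ∈ X) (hxh : x ∉ heads 𝒯 univ)
    (hK : #X + #{i | outcome (𝒯 i) X = some x} ≤ K) : ¬ Feasible N K 𝒯 := by
  intro hfeas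
  set S := X ∪ heads 𝒯 {j | outcome (𝒯 j) X = some x}
  have hS : #S ≤ K :=
    (card_union_le _ _).trans (le_trans (Nat.add_le_add_left (card_heads_le _ _) _) hK)
  have hSx : S.erase x = S :=
    hfeas ((card_erase_le).trans hS) hS
      (funext fun i => outcome_erase_of_ne (outcome_union_heads_ne 𝒯 hx hxh i))
  have hxS : x ∈ S := mem_union_left _ hx
  rw [← hSx] at hxS
  exact notMem_erase x S hxS

theorem mul_le_of_feasible {α β K : ℕ} (hαβ : α + β = K + 1) (hN : α * (β + 1) - 1 ≤ N)
    {𝒯 : Fin T → List (Fin N)} (hfeas : Feasible N K 𝒯) : α * β ≤ T := by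
  by_contra! hT
  have hα : α ≤ #(heads 𝒯 univ)ᶜ := by
    have := card_heads_le 𝒯 univ
    rw [card_compl, Fintype.card_fin]
    rw [card_univ, Fintype.card_fin] at this
    rw [mul_add, mul_one] at hN
    omega
  obtain ⟨X, hXh, hX⟩ := exists_subset_card_eq hα
  obtain ⟨_, hy, hfiber⟩ := exists_card_fiber_lt_of_card_lt_mul (s := univ)
    (t := X.map Function.Embedding.some) (f := fun i => outcome (𝒯 i) X)
    (by simpa [hX] using hT)
  obtain ⟨x, hx, rfl⟩ := mem_map.1 hy
  refine not_feasible_of_card_add_card_fiber_le 𝒯 hx (mem_compl.1 (hXh hx)) ?_ hfeas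
  rw [Function.Embedding.some_apply] at hfiber
  omega

theorem feasible_singletons (K : ℕ) : Feasible N K fun i : Fin N => [i] := by
  intro S₁ _ S₂ _ h
  ext v
  have hv := congrFun h v
  by_cases h₂ : v ∈ S₂ <;> simp_all [outcome]

theorem le_TNK {K m : ℕ}
    (h : ∀ (T : ℕ) (𝒯 : Fin T → List (Fin N)),
      (∀ i, (𝒯 i).Nodup) → Feasible N K 𝒯 → m ≤ T) :
    m ≤ TNK N K :=
  le_csInf ⟨N, _, fun i => List.nodup_singleton i, feasible_singletons K⟩
    fun _ ⟨𝒯, hnd, hfeas⟩ => h _ 𝒯 hnd hfeas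

theorem stmt7_general (α β K N : ℕ) (hαβ : α + β = K + 1)
    (hN : α * (β + 1) - 1 ≤ N) :
    (∀ (T : ℕ) (𝒯 : Fin T → List (Fin N)),
        (∀ i, (𝒯 i).Nodup) → Feasible N K 𝒯 → α * β ≤ T) ∧
    α * β ≤ TNK N K := by
  have h : ∀ (T : ℕ) (𝒯 : Fin T → List (Fin N)),
      (∀ i, (𝒯 i).Nodup) → Feasible N K 𝒯 → α * β ≤ T :=
    fun _ _ _ hfeas => mul_le_of_feasible hαβ hN hfeas
  exact ⟨h, le_TNK h⟩

theorem stmt7 (α β K N : ℕ) (hα : 1 ≤ α) (hβ : 1 ≤ β) (hαβ : α + β = K + 1)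
    (hN : α * (β + 1) - 1 ≤ N) :
    (∀ (T : ℕ) (𝒯 : Fin T → List (Fin N)),
        (∀ i, (𝒯 i).Nodup) → Feasible N K 𝒯 → α * β ≤ T) ∧
    α * β ≤ TNK N K :=
  stmt7_general α β K N hαβ hN
end
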